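/- arXiv:2002.01878 — 4 statements merged into one kernel-verified Lean document; each statement's English description precedes it below -/
import Mathlib

section
/- Let d : D × D → ℝ≥0 be symmetric with d(x,x) = 0 and d(x_i,x_j) > 0 for i ≠ j on a finite dataset x₁,…,x_N. Then there exists σ_PSD > 0 such that for all 0 < σ ≤ σ_PSD, the matrix K_σ = [exp(−d(x_i,x_j)²/(2σ²))] is positive semidefinite. -/
/-!
As `σ → 0⁺` the off-diagonal entries `exp (-d² / (2σ²))` of the kernel matrix tend to `0`, while
the diagonal entries are all `1`. So for small `σ` the matrix is diagonally dominant, and by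
Gershgorin's circle theorem its eigenvalues, which are real by symmetry, are nonnegative.
-/

open Filter Topology Real Finset

theorem Matrix.IsHermitian.posSemidef_of_sum_abs_offDiag_le_diag {n : Type*} [Fintype n]
    [DecidableEq n] {A : Matrix n n ℝ} (hA : A.IsHermitian)
    (h : ∀ k, ∑ j ∈ univ.erase k, |A k j| ≤ A k k) : A.PosSemidef := by
  refine hA.posSemidef_iff_eigenvalues_nonneg.2 fun i => ?_
  have hμ : Module.End.HasEigenvalue (Matrix.toLin' A) (hA.eigenvalues i) := by
    rw [Module.End.hasEigenvalue_iff_mem_spectrum, Matrix.spectrum_toLin']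
    exact hA.eigenvalues_mem_spectrum_real i
  obtain ⟨k, hk⟩ := eigenvalue_mem_ball hμ
  rw [Metric.mem_closedBall, Real.dist_eq] at hk
  simp only [Real.norm_eq_abs] at hk
  show 0 ≤ hA.eigenvalues i
  linarith [h k, (abs_le.1 hk).1]

theorem tendsto_exp_neg_sq_div_nhdsGT_zero {r : ℝ} (hr : r ≠ 0) :
    Tendsto (fun σ : ℝ => exp (-r ^ 2 / (2 * σ ^ 2))) (𝓝[>] 0) (𝓝 0) := by
  have h2 : Tendsto (fun σ : ℝ => 2 * σ ^ 2) (𝓝[>] 0) (𝓝[>] 0) := by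
    refine tendsto_nhdsWithin_of_tendsto_nhds_of_eventually_within _ ?_ ?_
    · have : Tendsto (fun σ : ℝ => 2 * σ ^ 2) (𝓝 0) (𝓝 0) := by
        simpa using (by fun_prop : Continuous fun σ : ℝ => 2 * σ ^ 2).tendsto 0
      exact this.mono_left nhdsWithin_le_nhds
    · filter_upwards [self_mem_nhdsWithin] with σ (hσ : 0 < σ)
      exact mul_pos two_pos (pow_pos hσ 2)
  have : Tendsto (fun σ : ℝ => -r ^ 2 / (2 * σ ^ 2)) (𝓝[>] 0) atBot := by
    simp_rw [div_eq_mul_inv]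
    exact (tendsto_inv_nhdsGT_zero.comp h2).const_mul_atTop_of_neg
      (neg_lt_zero.2 (sq_pos_of_ne_zero hr))
  exact tendsto_exp_atBot.comp this

noncomputable def gaussianKernelMatrix {ι D : Type*} (d : D → D → ℝ) (x : ι → D) (σ : ℝ) :
    Matrix ι ι ℝ :=
  Matrix.of fun i j => exp (-(d (x i) (x j)) ^ 2 / (2 * σ ^ 2))

section gaussianKernelMatrix

variable {ι D : Type*} {d : D → D → ℝ} {x : ι → D}

theorem isHermitian_gaussianKernelMatrix (hsymm : ∀ a b, d a b = d b a) (σ : ℝ) :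
    (gaussianKernelMatrix d x σ).IsHermitian := by
  ext i j
  simp [gaussianKernelMatrix, hsymm (x j) (x i)]

theorem gaussianKernelMatrix_apply_self (hdiag : ∀ a, d a a = 0) (σ : ℝ) (i : ι) :
    gaussianKernelMatrix d x σ i i = 1 := by
  simp [gaussianKernelMatrix, hdiag]

theorem tendsto_gaussianKernelMatrix_apply_nhdsGT_zero {i j : ι} (hij : d (x i) (x j) ≠ 0) :
    Tendsto (fun σ => gaussianKernelMatrix d x σ i j) (𝓝[>] 0) (𝓝 0) :=
  tendsto_exp_neg_sq_div_nhdsGT_zero hij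

theorem eventually_posSemidef_gaussianKernelMatrix [Fintype ι] [DecidableEq ι]
    (hsymm : ∀ a b, d a b = d b a) (hdiag : ∀ a, d a a = 0)
    (hne : ∀ i j, i ≠ j → d (x i) (x j) ≠ 0) :
    ∀ᶠ σ in 𝓝[>] 0, (gaussianKernelMatrix d x σ).PosSemidef := by
  have hoff : ∀ k, Tendsto (fun σ => ∑ j ∈ univ.erase k, |gaussianKernelMatrix d x σ k j|)
      (𝓝[>] 0) (𝓝 0) := fun k => by
    simpa only [abs_zero, sum_const_zero] using tendsto_finsetSum (univ.erase k) fun j hj =>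
      (tendsto_gaussianKernelMatrix_apply_nhdsGT_zero (hne k j (ne_of_mem_erase hj).symm)).abs
  filter_upwards [eventually_all.2 fun k => (hoff k).eventually (ge_mem_nhds one_pos)]
    with σ hσ
  refine (isHermitian_gaussianKernelMatrix hsymm σ).posSemidef_of_sum_abs_offDiag_le_diag
    fun k => ?_
  rw [gaussianKernelMatrix_apply_self hdiag]
  exact hσ k

end gaussianKernelMatrix

theorem exists_sigma_psd_general {D : Type*} (N : ℕ) (x : Fin N → D) (d : D → D → ℝ)
    (hsymm : ∀ a b, d a b = d b a)
    (hdiag : ∀ a, d a a = 0)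
    (hpos : ∀ i j : Fin N, i ≠ j → 0 < d (x i) (x j)) :
    ∃ σPSD > (0 : ℝ), ∀ σ : ℝ, 0 < σ → σ ≤ σPSD →
      (Matrix.of fun i j =>
        Real.exp (-(d (x i) (x j)) ^ 2 / (2 * σ ^ 2)) : Matrix (Fin N) (Fin N) ℝ).PosSemidef := by
  obtain ⟨σPSD, hσPSD, hsub⟩ := mem_nhdsGT_iff_exists_Ioc_subset.1
    (eventually_posSemidef_gaussianKernelMatrix hsymm hdiag fun i j hij => (hpos i j hij).ne')
  exact ⟨σPSD, hσPSD, fun σ hσ hσle => hsub ⟨hσ, hσle⟩⟩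

theorem exists_sigma_psd {D : Type*} (N : ℕ) (x : Fin N → D) (d : D → D → ℝ)
    (hsymm : ∀ a b, d a b = d b a) (hnonneg : ∀ a b, 0 ≤ d a b)
    (hdiag : ∀ a, d a a = 0)
    (hpos : ∀ i j : Fin N, i ≠ j → 0 < d (x i) (x j)) :
    ∃ σPSD > (0 : ℝ), ∀ σ : ℝ, 0 < σ → σ ≤ σPSD →
      (Matrix.of fun i j =>
        Real.exp (-(d (x i) (x j)) ^ 2 / (2 * σ ^ 2)) : Matrix (Fin N) (Fin N) ℝ).PosSemidef :=
  exists_sigma_psd_general N x d hsymm hdiag hpos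
end

section
/- Let f : X × X → ℝ be symmetric with f(x,x) = 0, and suppose that for every finite family x₁,…,x_n ∈ X and every c ∈ ℝⁿ with Σ c_i = 0, Σ_{i,j} c_i c_j f(x_i,x_j) ≤ 0 (f is conditionally negative semidefinite). Then for every t > 0 the kernel k_t(x,y) = exp(−t f(x,y)) is positive semidefinite: for all x₁,…,x_n and all c ∈ ℝⁿ, Σ_{i,j} c_i c_j exp(−t f(x_i,x_j)) ≥ 0. -/
/-!
Fix a base point `z`. Conditional negative semidefiniteness of `f`, applied on the family
`(z, x₁, …, xₙ)` to the zero-sum vector `(-∑ vᵢ, v₁, …, vₙ)`, says exactly that the centred matrix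
`Mᵢⱼ = f(xᵢ, z) + f(z, xⱼ) - f(xᵢ, xⱼ) - f(z, z)` is positive semidefinite. By the Schur product
theorem all Hadamard powers of `t • M` are positive semidefinite, hence so is its entrywise
exponential, the sum of the series `∑ (t • M)^{⊙k} / k!`. Finally
`exp (-t f(xᵢ, xⱼ)) = exp (t f(z, z)) · uᵢ uⱼ · exp (t Mᵢⱼ)` with `uᵢ = exp (-t f(xᵢ, z))`,
a positive multiple of a Hadamard product of positive semidefinite matrices.
-/

open Finset Matrix
open scoped ComplexOrder Nat

namespace Matrix

variable {ι 𝕜 : Type*} [Fintype ι] [RCLike 𝕜]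

theorem dotProduct_mulVec_eq_sum_sum {R : Type*} [CommSemiring R] (A : Matrix ι ι R)
    (v : ι → R) : v ⬝ᵥ A *ᵥ v = ∑ i, ∑ j, v i * v j * A i j := by
  simp only [dotProduct, mulVec, mul_sum]
  exact sum_congr rfl fun i _ => sum_congr rfl fun j _ => by ring

theorem isClosed_setOf_posSemidef : IsClosed {A : Matrix ι ι 𝕜 | A.PosSemidef} := by
  simp_rw [posSemidef_iff_dotProduct_mulVec, Set.ofPred_and, Set.ofPred_forall]
  exact (isClosed_eq continuous_id.matrix_conjTranspose continuous_id).inter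
    (isClosed_iInter fun x => isClosed_le continuous_const (by fun_prop))

theorem PosSemidef.of_hasSum {β : Type*} {F : β → Matrix ι ι 𝕜} {A : Matrix ι ι 𝕜}
    (hF : HasSum F A) (h : ∀ k, (F k).PosSemidef) : A.PosSemidef :=
  isClosed_setOf_posSemidef.mem_of_tendsto hF
    (Filter.Eventually.of_forall fun s => posSemidef_sum s fun k _ => h k)

theorem PosSemidef.map_pow {A : Matrix ι ι 𝕜} (hA : A.PosSemidef) :
    ∀ k : ℕ, (A.map (· ^ k)).PosSemidef
  | 0 => by
    convert posSemidef_vecMulVec_self_star (1 : ι → 𝕜) using 1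
    ext i j
    simp [vecMulVec]
  | k + 1 => by
    convert (hA.map_pow k).hadamard hA using 1
    ext i j
    simp [pow_succ]

theorem PosSemidef.map_exp {A : Matrix ι ι ℝ} (hA : A.PosSemidef) :
    (A.map Real.exp).PosSemidef := by
  refine PosSemidef.of_hasSum (F := fun k => (k ! : ℝ)⁻¹ • A.map (· ^ k))
    (Pi.hasSum.mpr fun i => Pi.hasSum.mpr fun j => ?_)
    fun k => (hA.map_pow k).smul (by positivity)
  simpa [Real.exp_eq_exp_ℝ, div_eq_inv_mul] using NormedSpace.expSeries_div_hasSum_exp (A i j)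

end Matrix

theorem Fin.sum_sum_cons_neg_sum_mul {R : Type*} [CommRing R] {n : ℕ} (v : Fin n → R)
    (K : Fin (n + 1) → Fin (n + 1) → R) :
    ∑ k, ∑ l, (Fin.cons (-∑ i, v i) v : Fin (n + 1) → R) k *
        (Fin.cons (-∑ i, v i) v : Fin (n + 1) → R) l * K k l =
      ∑ i, ∑ j, v i * v j * (K 0 0 - K 0 j.succ - K i.succ 0 + K i.succ j.succ) := by
  simp only [Fin.sum_univ_succ, Fin.cons_zero, Fin.cons_succ, mul_add, mul_sub, sum_add_distrib,
    sum_sub_distrib]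
  have h00 : (-∑ i, v i) * (-∑ i, v i) * K 0 0 = ∑ i, ∑ j, v i * v j * K 0 0 := by
    simp_rw [neg_mul_neg, sum_mul_sum, sum_mul]
  have h0j : ∑ j, (-∑ i, v i) * v j * K 0 j.succ = -∑ i, ∑ j, v i * v j * K 0 j.succ := by
    rw [sum_comm]
    simp_rw [neg_mul, sum_mul, sum_neg_distrib]
  have hi0 : ∑ i, v i * (-∑ j, v j) * K i.succ 0 = -∑ i, ∑ j, v i * v j * K i.succ 0 := by
    simp_rw [mul_neg, neg_mul, mul_sum, sum_mul, sum_neg_distrib]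
  rw [h00, h0j, hi0]
  ring

def IsCondNegSemidef {X : Type*} (f : X → X → ℝ) : Prop :=
  ∀ (n : ℕ) (x : Fin n → X) (c : Fin n → ℝ), ∑ i, c i = 0 →
    ∑ i, ∑ j, c i * c j * f (x i) (x j) ≤ 0

namespace IsCondNegSemidef

variable {X : Type*} {f : X → X → ℝ}

theorem posSemidef_centered (hf : IsCondNegSemidef f) (hsymm : ∀ x y, f x y = f y x) (z : X)
    {n : ℕ} (x : Fin n → X) :
    (of fun i j => f (x i) z + f z (x j) - f (x i) (x j) - f z z).PosSemidef := by
  refine PosSemidef.of_dotProduct_mulVec_nonneg (IsHermitian.ext fun i j => ?_) fun v => ?_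
  · simp only [of_apply, star_trivial, hsymm (x j) z, hsymm z (x i), hsymm (x j) (x i)]
    ring
  · have h := hf (n + 1) (Fin.cons z x) (Fin.cons (-∑ i, v i) v) (by simp [Fin.sum_cons])
    rw [Fin.sum_sum_cons_neg_sum_mul] at h
    simp only [star_trivial, dotProduct_mulVec_eq_sum_sum, of_apply]
    refine (neg_nonneg.mpr h).trans_eq ?_
    simp only [Fin.cons_zero, Fin.cons_succ, ← sum_neg_distrib]
    exact sum_congr rfl fun i _ => sum_congr rfl fun j _ => by ring

theorem posSemidef_exp_neg_mul (hf : IsCondNegSemidef f) (hsymm : ∀ x y, f x y = f y x) {t : ℝ}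
    (ht : 0 ≤ t) {n : ℕ} (x : Fin n → X) :
    (of fun i j => Real.exp (-t * f (x i) (x j))).PosSemidef := by
  rcases n with _ | n
  · rw [Subsingleton.elim (of _) 0]
    exact .zero
  set z := x 0
  set u : Fin (n + 1) → ℝ := fun i => Real.exp (-t * f (x i) z)
  have hexp := ((hf.posSemidef_centered hsymm z x).smul ht).map_exp
  have hK := ((posSemidef_vecMulVec_self_star u).hadamard hexp).smul (Real.exp_nonneg (t * f z z))
  have hsplit : (of fun i j => Real.exp (-t * f (x i) (x j))) =
      Real.exp (t * f z z) • (vecMulVec u (star u) ⊙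
        (t • of fun i j => f (x i) z + f z (x j) - f (x i) (x j) - f z z).map Real.exp) := by
    ext i j
    simp only [of_apply, Matrix.smul_apply, hadamard_apply, vecMulVec_apply, map_apply,
      star_trivial, u, smul_eq_mul, ← Real.exp_add, hsymm z (x j)]
    congr 1
    ring
  rwa [hsplit]

end IsCondNegSemidef

theorem schoenberg_forward_general {X : Type*} (f : X → X → ℝ)
    (hsymm : ∀ x y, f x y = f y x)
    (hcnd : ∀ (n : ℕ) (x : Fin n → X) (c : Fin n → ℝ), (∑ i, c i) = 0 →
      ∑ i, ∑ j, c i * c j * f (x i) (x j) ≤ 0) :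
    ∀ t : ℝ, 0 < t → ∀ (n : ℕ) (x : Fin n → X) (c : Fin n → ℝ),
      0 ≤ ∑ i, ∑ j, c i * c j * Real.exp (-t * f (x i) (x j)) := by
  intro t ht n x c
  simpa [dotProduct_mulVec_eq_sum_sum] using
    (IsCondNegSemidef.posSemidef_exp_neg_mul hcnd hsymm ht.le x).dotProduct_mulVec_nonneg c

theorem schoenberg_forward {X : Type*} (f : X → X → ℝ)
    (hsymm : ∀ x y, f x y = f y x) (hdiag : ∀ x, f x x = 0)
    (hcnd : ∀ (n : ℕ) (x : Fin n → X) (c : Fin n → ℝ), (∑ i, c i) = 0 →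
      ∑ i, ∑ j, c i * c j * f (x i) (x j) ≤ 0) :
    ∀ t : ℝ, 0 < t → ∀ (n : ℕ) (x : Fin n → X) (c : Fin n → ℝ),
      0 ≤ ∑ i, ∑ j, c i * c j * Real.exp (-t * f (x i) (x j)) :=
  schoenberg_forward_general f hsymm hcnd
end

section
/- Conversely, if exp(−t f(x,y)) is a positive semidefinite kernel for all t > 0, where f is symmetric with f(x,x)=0, then f is conditionally negative semidefinite: for all x₁,…,x_n and all c ∈ ℝⁿ with Σ c_i = 0, Σ_{i,j} c_i c_j f(x_i,x_j) ≤ 0. -/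
/-! For a centred vector `c`, the constant kernel `1` contributes nothing to the quadratic form,
so `∑ cᵢ cⱼ (1 - exp (-t fᵢⱼ)) / t = -(1/t) ∑ cᵢ cⱼ exp (-t fᵢⱼ) ≤ 0` for every `t > 0`.
As `t → 0⁺` the left side tends to `∑ cᵢ cⱼ fᵢⱼ`, the derivative at `0` of `t ↦ 1 - exp (-t fᵢⱼ)`. -/

open Filter Topology Finset

lemma tendsto_one_sub_exp_neg_mul_div (a : ℝ) :
    Tendsto (fun t => (1 - Real.exp (-t * a)) / t) (𝓝[≠] 0) (𝓝 a) := by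
  have hderiv : HasDerivAt (fun t => 1 - Real.exp (-t * a)) a 0 := by
    simpa using ((hasDerivAt_neg 0).mul_const a).exp.const_sub 1
  refine (hasDerivAt_iff_tendsto_slope.mp hderiv).congr fun t => ?_
  simp [slope_def_field]

lemma sum_sum_mul_one_sub_of_sum_eq_zero {ι : Type*} [Fintype ι] {c : ι → ℝ}
    (hc : ∑ i, c i = 0) (K : ι → ι → ℝ) :
    ∑ i, ∑ j, c i * c j * (1 - K i j) = -∑ i, ∑ j, c i * c j * K i j := by
  have hconst : ∑ i, ∑ j, c i * c j = 0 := by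
    rw [← Finset.sum_mul_sum, hc, zero_mul]
  simp only [mul_sub, mul_one, Finset.sum_sub_distrib, hconst, zero_sub]

theorem schoenberg_converse_general {X : Type*} (f : X → X → ℝ)
    (hpsd : ∀ t : ℝ, 0 < t → ∀ (n : ℕ) (x : Fin n → X) (c : Fin n → ℝ),
      0 ≤ ∑ i, ∑ j, c i * c j * Real.exp (-t * f (x i) (x j))) :
    ∀ (n : ℕ) (x : Fin n → X) (c : Fin n → ℝ), (∑ i, c i) = 0 →
      ∑ i, ∑ j, c i * c j * f (x i) (x j) ≤ 0 := by
  intro n x c hc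
  set q : ℝ → ℝ := fun t => ∑ i, ∑ j, c i * c j * ((1 - Real.exp (-t * f (x i) (x j))) / t)
  have hlim : Tendsto q (𝓝[>] 0) (𝓝 (∑ i, ∑ j, c i * c j * f (x i) (x j))) :=
    tendsto_finsetSum _ fun i _ => tendsto_finsetSum _ fun j _ =>
      ((tendsto_one_sub_exp_neg_mul_div _).mono_left
        (nhdsWithin_mono _ fun _ ht => ne_of_gt ht)).const_mul _
  have hq_nonpos : ∀ t > 0, q t ≤ 0 := by
    intro t ht
    have hq : q t = (∑ i, ∑ j, c i * c j * (1 - Real.exp (-t * f (x i) (x j)))) / t := by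
      simp only [q, Finset.sum_div, mul_div_assoc]
    rw [hq, sum_sum_mul_one_sub_of_sum_eq_zero hc]
    exact div_nonpos_of_nonpos_of_nonneg (neg_nonpos.mpr (hpsd t ht n x c)) ht.le
  exact le_of_tendsto hlim (eventually_mem_nhdsWithin.mono hq_nonpos)

theorem schoenberg_converse {X : Type*} (f : X → X → ℝ)
    (hsymm : ∀ x y, f x y = f y x) (hdiag : ∀ x, f x x = 0)
    (hpsd : ∀ t : ℝ, 0 < t → ∀ (n : ℕ) (x : Fin n → X) (c : Fin n → ℝ),
      0 ≤ ∑ i, ∑ j, c i * c j * Real.exp (-t * f (x i) (x j))) :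
    ∀ (n : ℕ) (x : Fin n → X) (c : Fin n → ℝ), (∑ i, c i) = 0 →
      ∑ i, ∑ j, c i * c j * f (x i) (x j) ≤ 0 :=
  schoenberg_converse_general f hpsd
end

section
/- Let y₁ ≤ … ≤ y_n and z₁ ≤ … ≤ z_n be real numbers and p ≥ 1. For any permutation τ of {1,…,n}, Σ_i |y_i − z_{τ(i)}|^p ≥ Σ_i |y_i − z_i|^p. -/
/-!
If `y` and `z` are sorted, the cost matrix `C i k = |y i - z k| ^ p` is a Monge array:
`C i k + C j l ≤ C i l + C j k` for `i ≤ j`, `k ≤ l`. Indeed, for `a ≤ b` and `c ≤ d` the pairs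
`(a - c, b - d)` and `(a - d, b - c)` have the same sum and the second one is more spread out, so
convexity of `t ↦ |t| ^ p` gives the exchange inequality. For a Monge array the identity is an
optimal assignment: if `σ ≠ 1` and `i` is the least point it moves, composing with the
transposition that makes `i` fixed does not increase the cost and shrinks the support.
-/

open Finset Equiv

theorem convexOn_norm_rpow {E : Type*} [SeminormedAddCommGroup E] [NormedSpace ℝ E] {p : ℝ}
    (hp : 1 ≤ p) : ConvexOn ℝ Set.univ fun x : E => ‖x‖ ^ p := by
  refine ⟨convex_univ, fun x _ y _ a b ha hb hab => ?_⟩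
  calc ‖a • x + b • y‖ ^ p ≤ (a • ‖x‖ + b • ‖y‖) ^ p := by
        gcongr
        simpa only [norm_smul_of_nonneg ha, norm_smul_of_nonneg hb, smul_eq_mul] using
          norm_add_le (a • x) (b • y)
    _ ≤ a • ‖x‖ ^ p + b • ‖y‖ ^ p :=
        (convexOn_rpow hp).2 (norm_nonneg x) (norm_nonneg y) ha hb hab

theorem ConvexOn.map_add_map_le_of_add_eq {s : Set ℝ} {f : ℝ → ℝ} (hf : ConvexOn ℝ s f)
    {m M x y : ℝ} (hm : m ∈ s) (hM : M ∈ s) (hmx : m ≤ x) (hxM : x ≤ M) (hxy : x + y = m + M) :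
    f x + f y ≤ f m + f M := by
  obtain rfl | hmx := hmx.eq_or_lt
  · rw [show y = M by linarith]
  have hmM : 0 < M - m := by linarith
  set a := (M - x) / (M - m)
  set b := (x - m) / (M - m)
  have hab : a + b = 1 := by simp only [a, b]; field_simp; ring
  have hx : a • m + b • M = x := by simp only [a, b, smul_eq_mul]; field_simp; ring
  have hy : b • m + a • M = y := by
    rw [show y = m + M - x by linarith]; simp only [a, b, smul_eq_mul]; field_simp; ring
  have ha : 0 ≤ a := div_nonneg (by linarith) hmM.le
  have hb : 0 ≤ b := div_nonneg (by linarith) hmM.le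
  calc f x + f y ≤ (a • f m + b • f M) + (b • f m + a • f M) := by
        rw [← hx, ← hy]
        exact add_le_add (hf.2 hm hM ha hb hab) (hf.2 hm hM hb ha (by rw [add_comm, hab]))
    _ = f m + f M := by simp only [smul_eq_mul]; linear_combination (f m + f M) * hab

theorem ConvexOn.map_sub_add_map_sub_le {f : ℝ → ℝ} (hf : ConvexOn ℝ Set.univ f) {a b c d : ℝ}
    (hab : a ≤ b) (hcd : c ≤ d) : f (a - c) + f (b - d) ≤ f (a - d) + f (b - c) :=
  hf.map_add_map_le_of_add_eq trivial trivial (by linarith) (by linarith) (by ring)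

def IsMonge {ι β : Type*} [LE ι] [Add β] [LE β] (C : ι → ι → β) : Prop :=
  ∀ ⦃i j k l⦄, i ≤ j → k ≤ l → C i k + C j l ≤ C i l + C j k

section Monge

variable {ι β : Type*} [LinearOrder ι] [Fintype ι] [AddCommMonoid β] [PartialOrder β]
  [IsOrderedAddMonoid β] {C : ι → ι → β}

theorem IsMonge.exists_card_support_lt_sum_le (hC : IsMonge C) {σ : Perm ι} (hσ : σ ≠ 1) :
    ∃ σ' : Perm ι, σ'.support.card < σ.support.card ∧
      ∑ k, C k (σ' k) ≤ ∑ k, C k (σ k) := by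
  have hne : σ.support.Nonempty := by rwa [nonempty_iff_ne_empty, Ne, Perm.support_eq_empty_iff]
  set i := σ.support.min' hne
  have hi : i ∈ σ.support := min'_mem _ _
  set j := σ⁻¹ i
  have hσj : σ j = i := σ.apply_symm_apply i
  have hij : i ≠ j := fun h => Perm.mem_support.mp hi (by rw [h, hσj, ← h])
  have hij_le : i ≤ j := min'_le _ _ (Perm.mem_support.mpr (by rw [hσj]; exact hij))
  have hiσi : i ≤ σ i := min'_le _ _ (Perm.apply_mem_support.mpr hi)
  -- `swap i (σ i) * σ` agrees with `σ` off `{i, j}` and sends `i ↦ i`, `j ↦ σ i`.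
  refine ⟨swap i (σ i) * σ, Perm.card_support_swap_mul (Perm.mem_support.mp hi), ?_⟩
  rw [← sum_add_sum_compl {i, j}, ← sum_add_sum_compl {i, j} fun k => C k (σ k),
    sum_pair hij, sum_pair hij]
  refine add_le_add ?_ (sum_congr rfl fun k hk => ?_).le
  · simpa [hσj] using hC hij_le hiσi
  · have hk' : k ≠ i ∧ k ≠ j := by simpa [not_or] using hk
    rw [Perm.mul_apply, swap_apply_of_ne_of_ne (fun h => hk'.2 (Perm.eq_inv_iff_eq.mpr h))
      (σ.injective.ne hk'.1)]

theorem IsMonge.sum_le_sum_comp_perm (hC : IsMonge C) (σ : Perm ι) :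
    ∑ k, C k k ≤ ∑ k, C k (σ k) := by
  induction h : σ.support.card using Nat.strong_induction_on generalizing σ with
  | _ n ih =>
    obtain rfl | hσ := eq_or_ne σ 1
    · rfl
    obtain ⟨σ', hcard, hle⟩ := hC.exists_card_support_lt_sum_le hσ
    exact (ih _ (h ▸ hcard) σ' rfl).trans hle

end Monge

theorem sorted_matching_optimal (n : ℕ) (y z : Fin n → ℝ)
    (hy : Monotone y) (hz : Monotone z) (p : ℝ) (hp : 1 ≤ p)
    (τ : Equiv.Perm (Fin n)) :
    ∑ i, |y i - z i| ^ p ≤ ∑ i, |y i - z (τ i)| ^ p := by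
  have hconv : ConvexOn ℝ Set.univ fun x : ℝ => |x| ^ p := by
    simpa only [Real.norm_eq_abs] using convexOn_norm_rpow (E := ℝ) hp
  have hC : IsMonge fun i k => |y i - z k| ^ p := fun i j k l hij hkl =>
    hconv.map_sub_add_map_sub_le (hy hij) (hz hkl)
  exact hC.sum_le_sum_comp_perm τ
end
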